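/- Let V_n ∈ ℚ(v)[V] be defined by the Chebyshev-type recursion V_0 = 1, V_1 = V, V_{n+1} = V·V_n - V_{n-1}. Then Habiro's expansion holds: V_n = Σ_{i=0}^{n} [n+i+1 choose 2i+1] · {i}! · P'_i, where [a choose b] = {a}!/({b}!{a-b}!), {j} = v^j - v^{-j}, and P'_i = ∏_{j=0}^{i-1}(V - v^{2j+1} - v^{-2j-1})/{i}!. -/

import Mathlib

open Polynomial

/-- The variable `v` of `ℚ(v)`. -/
noncomputable def v : RatFunc ℚ := RatFunc.X

/-- `{k}! = ∏_{j=1}^k (v^j - v^{-j})`. -/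
noncomputable def qFact (k : ℕ) : RatFunc ℚ :=
  ∏ j ∈ Finset.Icc 1 k, (v ^ (j : ℤ) - v ^ (-(j : ℤ)))

/-- Balanced quantum binomial `[a choose b] = {a}!/({b}!{a-b}!)`. -/
noncomputable def qBinom (a b : ℕ) : RatFunc ℚ := qFact a / (qFact b * qFact (a - b))

/-- `P'_i = ∏_{j=0}^{i-1}(V - v^{2j+1} - v^{-2j-1}) / {i}!` in `ℚ(v)[V]`. -/
noncomputable def Pk' (i : ℕ) : Polynomial (RatFunc ℚ) :=
  C (qFact i)⁻¹ * ∏ j ∈ Finset.range i,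
    (X - C (v ^ (2 * (j : ℤ) + 1) + v ^ (-(2 * (j : ℤ) + 1))))

/-- The Chebyshev-like polynomials `V_0 = 1`, `V_1 = V`, `V_{n+1} = V·V_n - V_{n-1}`. -/
noncomputable def cheb : ℕ → Polynomial (RatFunc ℚ)
  | 0 => 1
  | 1 => X
  | n + 2 => X * cheb (n + 1) - cheb n

lemma v_ne_zero : v ≠ 0 := RatFunc.X_ne_zero

noncomputable def br (m : ℕ) : RatFunc ℚ := v ^ (m : ℤ) - v ^ (-(m : ℤ))
noncomputable def ec (j : ℕ) : RatFunc ℚ := v ^ (2*(j:ℤ)+1) + v ^ (-(2*(j:ℤ)+1))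
noncomputable def Qp (i : ℕ) : Polynomial (RatFunc ℚ) := ∏ j ∈ Finset.range i, (X - C (ec j))
noncomputable def coeA (n i : ℕ) : RatFunc ℚ := qBinom (n+i+1) (2*i+1)
noncomputable def S (n : ℕ) : Polynomial (RatFunc ℚ) := ∑ i ∈ Finset.range (n+1), C (coeA n i) * Qp i

lemma br_ne_zero {m : ℕ} (hm : m ≠ 0) : br m ≠ 0 := by
  intro h
  have h1 : v ^ (m:ℤ) = v ^ (-(m:ℤ)) := by rwa [br, sub_eq_zero] at h
  have h2 : v ^ (m:ℤ) * v ^ (m:ℤ) = 1 := by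
    nth_rewrite 1 [h1]
    rw [← zpow_add₀ v_ne_zero, neg_add_cancel, zpow_zero]
  rw [zpow_natCast, ← pow_add] at h2
  have h3 : (Polynomial.X : ℚ[X]) ^ (m + m) = 1 := by
    apply RatFunc.algebraMap_injective (K := ℚ)
    rw [map_pow, map_one, RatFunc.algebraMap_X]
    exact h2
  have := congrArg (Polynomial.eval 0) h3
  simp [zero_pow (by omega : m + m ≠ 0)] at this

lemma qFact_zero : qFact 0 = 1 := by simp [qFact]

lemma qFact_succ (k : ℕ) : qFact (k+1) = qFact k * br (k+1) := by
  rw [qFact, qFact, Finset.prod_Icc_succ_top (Nat.le_add_left 1 k)]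
  rfl

lemma qFact_ne_zero (k : ℕ) : qFact k ≠ 0 := by
  induction k with
  | zero => rw [qFact_zero]; exact one_ne_zero
  | succ n ih => rw [qFact_succ]; exact mul_ne_zero ih (br_ne_zero n.succ_ne_zero)

lemma qFact_one : qFact 1 = br 1 := by rw [show (1:ℕ) = 0 + 1 from rfl, qFact_succ, qFact_zero, one_mul]

noncomputable def brz (z : ℤ) : RatFunc ℚ := v ^ z - v ^ (-z)

set_option maxHeartbeats 1000000 in
lemma masterZ (a b : ℤ) :
    brz (a+a+2) * brz (a+a+3) + (v ^ (a+a+3) + v ^ (-(a+a+3))) * (brz (a+a+b+4) * brz (b+2))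
      = brz (a+a+b+4) * brz (a+a+b+5) + brz (b+1) * brz (b+2) := by
  have hv := v_ne_zero
  have hA : v ^ a ≠ 0 := zpow_ne_zero _ hv
  have hB : v ^ b ≠ 0 := zpow_ne_zero _ hv
  have h2 : v ^ (2:ℕ) ≠ 0 := pow_ne_zero _ hv
  have h3 : v ^ (3:ℕ) ≠ 0 := pow_ne_zero _ hv
  have h4 : v ^ (4:ℕ) ≠ 0 := pow_ne_zero _ hv
  have h5 : v ^ (5:ℕ) ≠ 0 := pow_ne_zero _ hv
  simp only [brz, neg_add, zpow_add₀ hv, zpow_neg, zpow_ofNat]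
  field_simp
  ring

lemma br_eq_brz (m : ℕ) : br m = brz (m : ℤ) := rfl

lemma master (k m : ℕ) :
    br (2*k+2) * br (2*k+3) + ec (k+1) * (br (2*k+m+4) * br (m+2))
      = br (2*k+m+4) * br (2*k+m+5) + br (m+1) * br (m+2) := by
  have h := masterZ (k:ℤ) (m:ℤ)
  simp only [br_eq_brz, ec]
  push_cast
  convert h using 4 <;> ring_nf

lemma br_nat (m : ℕ) (z : ℤ) (h : (m:ℤ) = z) : br m = brz z := by rw [br_eq_brz, h]

lemma smallZ1 (a : ℤ) : brz (a+1) + brz (a+3) = (v ^ (1:ℤ) + v ^ (-1:ℤ)) * brz (a+2) := by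
  have hv := v_ne_zero
  have hA : v ^ a ≠ 0 := zpow_ne_zero _ hv
  simp only [brz, neg_add, zpow_add₀ hv, zpow_neg, zpow_ofNat, zpow_one]
  field_simp
  ring

lemma smallA (n : ℕ) : br (n+1) + br (n+3) = ec 0 * br (n+2) := by
  have h := smallZ1 (n:ℤ)
  rw [br_nat (n+1) ((n:ℤ)+1) (by push_cast; ring),
      br_nat (n+3) ((n:ℤ)+3) (by push_cast; ring),
      br_nat (n+2) ((n:ℤ)+2) (by push_cast; ring),
      ec, show (2*(((0:ℕ)):ℤ)+1) = 1 from by norm_num]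
  exact h

lemma smallZ2 (a : ℤ) : brz (a+a+2) + (v ^ (a+a+3) + v ^ (-(a+a+3))) * brz 1 = brz (a+a+4) := by
  have hv := v_ne_zero
  have hA : v ^ a ≠ 0 := zpow_ne_zero _ hv
  simp only [brz, neg_add, zpow_add₀ hv, zpow_neg, zpow_ofNat, zpow_one]
  field_simp
  ring

lemma smallB (n : ℕ) : br (2*n+2) + ec (n+1) * br 1 = br (2*n+4) := by
  have h := smallZ2 (n:ℤ)
  rw [br_nat (2*n+2) ((n:ℤ)+(n:ℤ)+2) (by push_cast; ring),
      br_nat (2*n+4) ((n:ℤ)+(n:ℤ)+4) (by push_cast; ring),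
      br_nat 1 1 (by norm_num),
      ec, show (2*(((n+1:ℕ)):ℤ)+1) = (n:ℤ)+(n:ℤ)+3 from by push_cast; ring]
  exact h

lemma frac_eq (a1 d1 a2 d2 x : RatFunc ℚ) (h1 : d1 ≠ 0) (h2 : d2 ≠ 0)
    (h : a1 * d2 = a2 * x * d1) : a1 / d1 = a2 / d2 * x := by
  rw [div_mul_eq_mul_div, div_eq_div_iff h1 h2]; linear_combination h

lemma coeff_main (k m : ℕ) :
    qFact (2*k+m+3)/(qFact (2*k+1)*qFact (m+2))
      + ec (k+1) * (qFact (2*k+m+4)/(qFact (2*k+3)*qFact (m+1)))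
    = qFact (2*k+m+5)/(qFact (2*k+3)*qFact (m+2))
      + qFact (2*k+m+3)/(qFact (2*k+3)*qFact m) := by
  have e23 : qFact (2*k+3) = qFact (2*k+1) * br (2*k+2) * br (2*k+3) := by
    rw [show 2*k+3 = (2*k+2)+1 from rfl, qFact_succ, show 2*k+2 = (2*k+1)+1 from rfl, qFact_succ]
  have em2 : qFact (m+2) = qFact m * br (m+1) * br (m+2) := by
    rw [show m+2 = (m+1)+1 from rfl, qFact_succ, qFact_succ]
  have em1 : qFact (m+1) = qFact m * br (m+1) := qFact_succ m
  have e4 : qFact (2*k+m+4) = qFact (2*k+m+3) * br (2*k+m+4) := by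
    rw [show 2*k+m+4 = (2*k+m+3)+1 from rfl, qFact_succ]
  have e5 : qFact (2*k+m+5) = qFact (2*k+m+3) * br (2*k+m+4) * br (2*k+m+5) := by
    rw [show 2*k+m+5 = (2*k+m+4)+1 from rfl, qFact_succ, e4]
  have h1 : qFact (2*k+m+3)/(qFact (2*k+1)*qFact (m+2))
      = qFact (2*k+m+3)/(qFact (2*k+3)*qFact (m+2)) * (br (2*k+2)*br (2*k+3)) :=
    frac_eq _ _ _ _ _ (mul_ne_zero (qFact_ne_zero _) (qFact_ne_zero _))
      (mul_ne_zero (qFact_ne_zero _) (qFact_ne_zero _)) (by rw [e23]; ring)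
  have h2 : qFact (2*k+m+4)/(qFact (2*k+3)*qFact (m+1))
      = qFact (2*k+m+3)/(qFact (2*k+3)*qFact (m+2)) * (br (2*k+m+4)*br (m+2)) :=
    frac_eq _ _ _ _ _ (mul_ne_zero (qFact_ne_zero _) (qFact_ne_zero _))
      (mul_ne_zero (qFact_ne_zero _) (qFact_ne_zero _)) (by rw [e4, em2, em1]; ring)
  have h3 : qFact (2*k+m+5)/(qFact (2*k+3)*qFact (m+2))
      = qFact (2*k+m+3)/(qFact (2*k+3)*qFact (m+2)) * (br (2*k+m+4)*br (2*k+m+5)) :=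
    frac_eq _ _ _ _ _ (mul_ne_zero (qFact_ne_zero _) (qFact_ne_zero _))
      (mul_ne_zero (qFact_ne_zero _) (qFact_ne_zero _)) (by rw [e5]; ring)
  have h4 : qFact (2*k+m+3)/(qFact (2*k+3)*qFact m)
      = qFact (2*k+m+3)/(qFact (2*k+3)*qFact (m+2)) * (br (m+1)*br (m+2)) :=
    frac_eq _ _ _ _ _ (mul_ne_zero (qFact_ne_zero _) (qFact_ne_zero _))
      (mul_ne_zero (qFact_ne_zero _) (qFact_ne_zero _)) (by rw [em2]; ring)
  rw [h1, h2, h3, h4]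
  linear_combination (qFact (2*k+m+3)/(qFact (2*k+3)*qFact (m+2))) * master k m

lemma br_one_ne : br 1 ≠ 0 := br_ne_zero one_ne_zero

lemma coeA_zero (n : ℕ) : coeA n 0 = br (n+1) / br 1 := by
  simp only [coeA, qBinom]
  rw [show n+0+1 = n+1 from rfl, show 2*0+1 = 1 from rfl,
      show n+1-1 = n from rfl, qFact_succ, qFact_one,
      div_eq_div_iff (mul_ne_zero br_one_ne (qFact_ne_zero _)) br_one_ne]
  ring

lemma coeA_self (n : ℕ) : coeA n n = 1 := by
  simp only [coeA, qBinom]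
  rw [show n+n+1 = 2*n+1 from by omega, Nat.sub_self, qFact_zero, mul_one,
      div_self (qFact_ne_zero _)]

lemma coeA_subtop (n : ℕ) : coeA (n+1) n = br (2*n+2) / br 1 := by
  simp only [coeA, qBinom]
  rw [show n+1+n+1 = (2*n+1)+1 from by omega, show (2*n+1)+1 - (2*n+1) = 1 from by omega,
      qFact_succ, qFact_one, show 2*n+1+1 = 2*n+2 from rfl,
      div_eq_div_iff (mul_ne_zero (qFact_ne_zero _) br_one_ne) br_one_ne]
  ring

lemma coeA_top2 (n : ℕ) : coeA (n+2) (n+1) = br (2*n+4) / br 1 := by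
  simp only [coeA, qBinom]
  rw [show n+2+(n+1)+1 = (2*(n+1)+1)+1 from by omega,
      show (2*(n+1)+1)+1 - (2*(n+1)+1) = 1 from by omega,
      qFact_succ, qFact_one, show 2*(n+1)+1+1 = 2*n+4 from by omega,
      div_eq_div_iff (mul_ne_zero (qFact_ne_zero _) br_one_ne) br_one_ne]
  ring

lemma coeff0 (n : ℕ) : coeA (n+2) 0 + coeA n 0 = coeA (n+1) 0 * ec 0 := by
  rw [coeA_zero, coeA_zero, coeA_zero, ← add_div, div_mul_eq_mul_div,
      show n+2+1 = n+3 from rfl, add_comm (br (n+3)), smallA, mul_comm]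

lemma coeffTop (n : ℕ) : coeA (n+1) n + ec (n+1) * coeA (n+1) (n+1) = coeA (n+2) (n+1) := by
  rw [coeA_subtop, coeA_self, coeA_top2, mul_one, div_add' _ _ _ br_one_ne, smallB]

lemma coeff_mid (k m : ℕ) :
    coeA (k+1+m+1) k + ec (k+1) * coeA (k+1+m+1) (k+1)
      = coeA (k+1+m+2) (k+1) + coeA (k+1+m) (k+1) := by
  simp only [coeA, qBinom]
  rw [show k+1+m+1+k+1 = 2*k+m+3 from by omega,
      show k+1+m+1+(k+1)+1 = 2*k+m+4 from by omega,
      show k+1+m+2+(k+1)+1 = 2*k+m+5 from by omega,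
      show k+1+m+(k+1)+1 = 2*k+m+3 from by omega,
      show 2*k+m+3 - (2*k+1) = m+2 from by omega,
      show 2*(k+1)+1 = 2*k+3 from by omega,
      show 2*k+m+4 - (2*k+3) = m+1 from by omega,
      show 2*k+m+5 - (2*k+3) = m+2 from by omega,
      show 2*k+m+3 - (2*k+3) = m from by omega]
  exact coeff_main k m

noncomputable def FF (n : ℕ) : ℕ → Polynomial (RatFunc ℚ)
  | 0 => 0
  | (j+1) => C (coeA (n+1) j) * Qp (j+1)

noncomputable def GG (n i : ℕ) : Polynomial (RatFunc ℚ) :=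
  if i = n+2 then 0 else C (coeA (n+1) i * ec i) * Qp i

noncomputable def DD (n i : ℕ) : Polynomial (RatFunc ℚ) :=
  if i ≤ n then C (coeA n i) * Qp i else 0

lemma termwise (n i : ℕ) (hi : i < n+3) :
    C (coeA (n+2) i) * Qp i = FF n i + GG n i - DD n i := by
  match i with
  | 0 =>
    have h2 : C (coeA (n+2) 0) + C (coeA n 0) = C (coeA (n+1) 0 * ec 0) := by
      rw [← map_add, coeff0]
    rw [FF, GG, DD, if_neg (by omega), if_pos (Nat.zero_le n)]
    linear_combination Qp 0 * h2
  | (j+1) =>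
    rw [FF]
    by_cases h : j + 1 ≤ n
    · obtain ⟨m, rfl⟩ : ∃ m, n = j+1+m := ⟨n - (j+1), by omega⟩
      have hC := congrArg C (coeff_mid j m)
      rw [map_add, map_add, map_mul] at hC
      rw [GG, DD, if_neg (by omega), if_pos h, map_mul]
      linear_combination (-(Qp (j+1))) * hC
    · by_cases h2 : j = n
      · subst h2
        have hC := congrArg C (coeffTop j)
        rw [map_add, map_mul] at hC
        rw [GG, DD, if_neg (by omega), if_neg (by omega), map_mul]
        linear_combination (-(Qp (j+1))) * hC
      · have : j = n+1 := by omega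
        subst this
        rw [GG, DD, if_pos rfl, if_neg (by omega), coeA_self, coeA_self]
        ring

lemma Qp_succ (i : ℕ) : Qp (i+1) = Qp i * (X - C (ec i)) := Finset.prod_range_succ _ _

lemma step (n : ℕ) : S (n+2) = X * S (n+1) - S n := by
  have hsum : S (n+2) = ∑ i ∈ Finset.range (n+3), (FF n i + GG n i - DD n i) :=
    Finset.sum_congr rfl (fun i hi => termwise n i (Finset.mem_range.mp hi))
  have hF : ∑ i ∈ Finset.range (n+3), FF n i
      = ∑ i ∈ Finset.range (n+2), C (coeA (n+1) i) * Qp (i+1) := by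
    rw [Finset.sum_range_succ']
    simp [FF]
  have hG : ∑ i ∈ Finset.range (n+3), GG n i
      = ∑ i ∈ Finset.range (n+2), C (coeA (n+1) i * ec i) * Qp i := by
    rw [Finset.sum_range_succ]
    rw [GG, if_pos rfl, add_zero]
    exact Finset.sum_congr rfl (fun i hi => by
      rw [GG, if_neg (by have := Finset.mem_range.mp hi; omega)])
  have hD : ∑ i ∈ Finset.range (n+3), DD n i = S n := by
    rw [Finset.sum_range_succ, Finset.sum_range_succ, DD, DD,
        if_neg (by omega), if_neg (by omega), add_zero, add_zero, S]
    exact Finset.sum_congr rfl (fun i hi => by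
      rw [DD, if_pos (by have := Finset.mem_range.mp hi; omega)])
  have key : ∀ i : ℕ, C (coeA (n+1) i) * Qp (i+1) + C (coeA (n+1) i * ec i) * Qp i
      = C (coeA (n+1) i) * (X * Qp i) := by
    intro i; rw [Qp_succ, map_mul]; ring
  rw [hsum, Finset.sum_sub_distrib, Finset.sum_add_distrib, hF, hG, hD,
      ← Finset.sum_add_distrib]
  simp_rw [key]
  congr 1
  rw [S, Finset.mul_sum]
  exact Finset.sum_congr rfl (fun i _ => by ring)

lemma br_two : br 2 = ec 0 * br 1 := by
  have hv := v_ne_zero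
  simp only [br, ec, Nat.cast_ofNat, Nat.cast_one, Nat.cast_zero, mul_zero, zero_add,
    zpow_one, zpow_neg, zpow_ofNat]
  field_simp
  ring

lemma S_zero : S 0 = 1 := by
  rw [S, Finset.sum_range_one, coeA_self]
  simp [Qp]

lemma S_one : S 1 = X := by
  rw [S, Finset.sum_range_succ, Finset.sum_range_one, coeA_self, coeA_zero,
      show (1:ℕ)+1 = 2 from rfl, br_two, mul_div_assoc, div_self br_one_ne, mul_one]
  simp only [Qp, Finset.range_one, Finset.range_zero, Finset.prod_empty,
    Finset.prod_singleton, mul_one, one_mul, map_one]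
  ring

lemma Pk'_eq (i : ℕ) : Pk' i = C (qFact i)⁻¹ * Qp i := rfl


/-- Habiro's expansion `V_n = Σ_{i=0}^n [n+i+1 choose 2i+1] · {i}! · P'_i`. -/
theorem habiro_expansion (n : ℕ) :
    cheb n =
      ∑ i ∈ Finset.range (n + 1), C (qBinom (n + i + 1) (2 * i + 1) * qFact i) * Pk' i := by
  have hterm : ∀ i : ℕ,
      C (qBinom (n + i + 1) (2 * i + 1) * qFact i) * Pk' i = C (coeA n i) * Qp i := by
    intro i
    rw [Pk'_eq, map_mul]
    have h : C (qFact i) * C (qFact i)⁻¹ = 1 := by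
      rw [← map_mul, mul_inv_cancel₀ (qFact_ne_zero i), map_one]
    calc C (qBinom (n+i+1) (2*i+1)) * C (qFact i) * (C (qFact i)⁻¹ * Qp i)
        = C (qBinom (n+i+1) (2*i+1)) * (C (qFact i) * C (qFact i)⁻¹) * Qp i := by ring
      _ = C (coeA n i) * Qp i := by rw [h, mul_one]; rfl
  rw [Finset.sum_congr rfl (fun i _ => hterm i)]
  have key : ∀ m : ℕ, cheb m = S m ∧ cheb (m+1) = S (m+1) := by
    intro m
    induction m with
    | zero => exact ⟨S_zero.symm, S_one.symm⟩
    | succ k ih =>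
      refine ⟨ih.2, ?_⟩
      rw [show cheb (k+1+1) = X * cheb (k+1) - cheb k from rfl, ih.1, ih.2, ← step]
  exact (key n).1
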